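/- arXiv:0902.1485 — 2 statements merged into one kernel-verified Lean document; each statement's English description precedes it below -/
import Mathlib

section
/- Let X be the weight lattice of a finite root system, W its Weyl group, X* ⊆ X a W-invariant sublattice, and ρ^L ∈ X with ⟨α̌_i, ρ^L⟩ = l_i such that w(ρ^L) − ρ^L ∈ X* for all w ∈ W. If ξ = Σ_λ a_λ e^λ ∈ Z[X]^W satisfies a_λ = 0 for all λ ∈ X*, then the product ξ · χ(ρ^L − ρ) lies in the Z-span of Weyl characters χ(μ) with μ ∈ X^+ and μ ∉ (ρ^L − ρ) + X*. -/
/-!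
Multiplying the Weyl numerator `A_ν` by a `W`-invariant `ξ` and reindexing each `w`-summand by
`λ ↦ w • λ` gives `ξ · A_ν = Σ_λ a_λ A_{λ+ν}`; cancelling `A_0` yields the Brauer–Klimyk
formula `ξ · χ(ν) = Σ_λ a_λ χ(λ + ν)`. For `ν = ρ^L − ρ`, straightening `χ(λ + ν)` moves
`λ + ν` by a dot action `w ·`, and `w · (λ + ν) − ν = w λ + (w ρ^L − ρ^L)` lies in `X*`
exactly when `λ` does. So only the terms with `λ ∉ X*` survive, and they contribute
characters `χ(μ)` with `μ ∉ ν + X*`.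
-/

open AddMonoidAlgebra

/-- The alternating sum `A_ν = Σ_{w ∈ W} ε(w) e^{w·ν}` in the group ring `ℤ[X]`. -/
noncomputable def Aalt {X : Type*} [AddCommGroup X] {W : Type*} [Group W] [Fintype W]
    [DistribMulAction W X] (ε : W →* ℤˣ) (ρ : X) (ν : X) : AddMonoidAlgebra ℤ X :=
  ∑ w : W, AddMonoidAlgebra.single (w • (ν + ρ) - ρ) ((ε w : ℤˣ) : ℤ)

theorem sum_coeff_support_single {k X : Type*} [Semiring k] (ξ : AddMonoidAlgebra k X) :
    ∑ lam ∈ ξ.coeff.support, single lam (ξ.coeff lam) = ξ := by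
  conv_rhs => rw [← AddMonoidAlgebra.sum_coeff_single ξ]
  rfl

section BrauerKlimyk

variable {X : Type*} [AddCommGroup X] {W : Type*} [Group W] [Fintype W]
  [DistribMulAction W X]

theorem mul_Aalt_of_invariant (ε : W →* ℤˣ) (ρ ν : X) {ξ : AddMonoidAlgebra ℤ X}
    (hinv : ∀ (w : W) (lam : X), ξ.coeff (w • lam) = ξ.coeff lam) :
    ξ * Aalt ε ρ ν = ∑ lam ∈ ξ.coeff.support, ξ.coeff lam • Aalt ε ρ (lam + ν) := by
  classical
  conv_lhs => rw [← sum_coeff_support_single ξ]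
  unfold Aalt
  simp only [Finset.sum_mul_sum, Finset.smul_sum]
  rw [Finset.sum_comm, Finset.sum_comm (s := ξ.coeff.support)]
  refine Finset.sum_congr rfl fun w _ => ?_
  refine Finset.sum_nbij' (w⁻¹ • ·) (w • ·) ?_ ?_ (fun lam _ => smul_inv_smul w lam)
    (fun lam _ => inv_smul_smul w lam) fun lam _ => ?_
  · intro lam hlam
    simpa only [Finset.mem_coe, Finsupp.mem_support_iff, hinv] using hlam
  · intro lam hlam
    simpa only [Finset.mem_coe, Finsupp.mem_support_iff, hinv] using hlam
  · rw [single_mul_single, smul_single', hinv]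
    simp only [smul_add, smul_inv_smul]
    congr 1
    abel

theorem mul_character_of_invariant (ε : W →* ℤˣ) (ρ ν : X) {χ : X → AddMonoidAlgebra ℤ X}
    (hχ : ∀ μ : X, Aalt ε ρ 0 * χ μ = Aalt ε ρ μ)
    (hreg : ∀ x y : AddMonoidAlgebra ℤ X, Aalt ε ρ 0 * x = Aalt ε ρ 0 * y → x = y)
    {ξ : AddMonoidAlgebra ℤ X} (hinv : ∀ (w : W) (lam : X), ξ.coeff (w • lam) = ξ.coeff lam) :
    ξ * χ ν = ∑ lam ∈ ξ.coeff.support, ξ.coeff lam • χ (lam + ν) := by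
  apply hreg
  simp only [mul_left_comm _ ξ, hχ, Finset.mul_sum, mul_smul_comm]
  exact mul_Aalt_of_invariant ε ρ ν hinv

end BrauerKlimyk

section Avoidance

variable {X : Type*} [AddCommGroup X] {W : Type*} [Group W] [DistribMulAction W X]
  {Xstar : AddSubgroup X}

theorem smul_mem_iff_of_forall_smul_mem (hstar : ∀ (w : W), ∀ x ∈ Xstar, w • x ∈ Xstar)
    (w : W) (x : X) : w • x ∈ Xstar ↔ x ∈ Xstar :=
  ⟨fun h => inv_smul_smul w x ▸ hstar w⁻¹ _ h, hstar w x⟩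

theorem dot_action_sub_mem_iff (hstar : ∀ (w : W), ∀ x ∈ Xstar, w • x ∈ Xstar) {ρL : X}
    (hρL : ∀ w : W, w • ρL - ρL ∈ Xstar) (ρ lam : X) (w : W) :
    w • (lam + (ρL - ρ) + ρ) - ρ - (ρL - ρ) ∈ Xstar ↔ lam ∈ Xstar := by
  have h : w • (lam + (ρL - ρ) + ρ) - ρ - (ρL - ρ) = w • lam + (w • ρL - ρL) := by
    rw [add_assoc, sub_add_cancel, smul_add]
    abel
  rw [h, Xstar.add_mem_cancel_right (hρL w), smul_mem_iff_of_forall_smul_mem hstar]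

end Avoidance

/-- Let `X` be the weight lattice of a finite root system with Weyl group
`W`, `X* ⊆ X` a `W`-invariant sublattice, and `ρ^L ∈ X` with `w(ρ^L) − ρ^L ∈ X*` for all
`w ∈ W`.  The Weyl characters are characterized by `A_0 · χ(μ) = A_μ` (`A_0` being a
non-zero-divisor), dominance is recorded by the coroot functionals `pair i`, and every
`χ(λ)` either vanishes or equals `±χ(μ)` for a dominant `μ` in the shifted `W`-orbit of
`λ`.  If `ξ = Σ_λ a_λ e^λ ∈ ℤ[X]^W` has `a_λ = 0` for all `λ ∈ X*`, then
`ξ · χ(ρ^L − ρ)` lies in the `ℤ`-span of the Weyl characters `χ(μ)` with `μ` dominant and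
`μ ∉ (ρ^L − ρ) + X*`. -/
theorem avoidance_lemma {X : Type*} [AddCommGroup X] {W : Type*} [Group W]
    [Fintype W] [DistribMulAction W X] (ε : W →* ℤˣ) (ρ ρL : X)
    {I : Type*} (pair : I → X → ℤ)
    (Xstar : AddSubgroup X) (hstar : ∀ (w : W), ∀ x ∈ Xstar, w • x ∈ Xstar)
    (hρL : ∀ w : W, w • ρL - ρL ∈ Xstar)
    (χ : X → AddMonoidAlgebra ℤ X)
    (hχ : ∀ μ : X, Aalt ε ρ 0 * χ μ = Aalt ε ρ μ)
    (hreg : ∀ x y : AddMonoidAlgebra ℤ X, Aalt ε ρ 0 * x = Aalt ε ρ 0 * y → x = y)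
    (hdom : ∀ lam : X, χ lam = 0 ∨ ∃ (w : W) (μ : X), (∀ i, 0 ≤ pair i μ) ∧
      w • (lam + ρ) - ρ = μ ∧ (χ lam = χ μ ∨ χ lam = -χ μ))
    (ξ : AddMonoidAlgebra ℤ X) (hinv : ∀ (w : W) (lam : X), ξ.coeff (w • lam) = ξ.coeff lam)
    (hsupp : ∀ lam ∈ Xstar, ξ.coeff lam = 0) :
    ξ * χ (ρL - ρ) ∈ Submodule.span ℤ
      {y : AddMonoidAlgebra ℤ X | ∃ μ : X, (∀ i, 0 ≤ pair i μ) ∧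
        μ - (ρL - ρ) ∉ Xstar ∧ y = χ μ} := by
  rw [mul_character_of_invariant ε ρ (ρL - ρ) hχ hreg hinv]
  refine Submodule.sum_mem _ fun lam hlam => Submodule.smul_mem _ _ ?_
  have hlam_notMem : lam ∉ Xstar := fun h => Finsupp.mem_support_iff.mp hlam (hsupp lam h)
  rcases hdom (lam + (ρL - ρ)) with h0 | ⟨w, μ, hμ_dom, rfl, hχ_eq⟩
  · rw [h0]
    exact Submodule.zero_mem _
  have hμ : χ (w • (lam + (ρL - ρ) + ρ) - ρ) ∈ Submodule.span ℤ
      {y : AddMonoidAlgebra ℤ X | ∃ μ : X, (∀ i, 0 ≤ pair i μ) ∧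
        μ - (ρL - ρ) ∉ Xstar ∧ y = χ μ} :=
    Submodule.subset_span ⟨_, hμ_dom,
      (dot_action_sub_mem_iff hstar hρL ρ lam w).not.mpr hlam_notMem, rfl⟩
  rcases hχ_eq with h | h <;> rw [h]
  · exact hμ
  · exact neg_mem hμ
end

section
/- (Steinberg-type factorization of characters) Let Φ be the positive roots of a finite root system with weight lattice X, Weyl vector ρ, and Weyl character χ. Let Φ* be the modified root system with positive roots α* = l_α α, Weyl vector ρ^L, and Weyl character χ^L on X* ∩ X^+. Then for every λ ∈ X* ∩ X^+, χ(λ + ρ^L − ρ) = χ(ρ^L − ρ) · χ^L(λ) in Z[X]. -/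
/-- **Steinberg-type factorization of characters.** Let `X` be the weight
lattice of a finite root system with Weyl group `W`, Weyl vector `ρ` and Weyl characters
`χ` (characterized by the Weyl character formula `A_0 · χ(μ) = A_μ`, `A_0` being a
non-zero-divisor), and let the `ℓ`-modified datum have sublattice
`X* = {λ : l_i ∣ ⟨α̌_i, λ⟩}`, Weyl vector `ρ^L` and Weyl characters `χ^L`, characterized
by the Weyl character formula for the modified datum (same Weyl group, shift `ρ^L`).
Then for every `λ ∈ X* ∩ X^+`, one has `χ(λ + ρ^L − ρ) = χ(ρ^L − ρ) · χ^L(λ)` in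
`ℤ[X]`. -/
theorem steinberg_factorization {X : Type*} [AddCommGroup X] {W : Type*} [Group W]
    [Fintype W] [DistribMulAction W X] (ε : W →* ℤˣ) (ρ ρL : X)
    {I : Type*} (pair : I → X → ℤ) (l : I → ℕ)
    (χ χL : X → AddMonoidAlgebra ℤ X)
    (hχ : ∀ μ : X, Aalt ε ρ 0 * χ μ = Aalt ε ρ μ)
    (hχL : ∀ μ : X, Aalt ε ρL 0 * χL μ = Aalt ε ρL μ)
    (hreg : ∀ x y : AddMonoidAlgebra ℤ X, Aalt ε ρ 0 * x = Aalt ε ρ 0 * y → x = y)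
    (hregL : ∀ x y : AddMonoidAlgebra ℤ X, Aalt ε ρL 0 * x = Aalt ε ρL 0 * y → x = y)
    (lam : X) (hstar : ∀ i, (l i : ℤ) ∣ pair i lam) (hplus : ∀ i, 0 ≤ pair i lam) :
    χ (lam + ρL - ρ) = χ (ρL - ρ) * χL lam := by
  apply hreg
  apply hregL
  have e1 : lam + ρL - ρ + ρ = lam + ρL := by abel
  have e2 : ρL - ρ + ρ = ρL := by abel
  calc Aalt ε ρL 0 * (Aalt ε ρ 0 * χ (lam + ρL - ρ))
      = Aalt ε ρL 0 * Aalt ε ρ (lam + ρL - ρ) := by rw [hχ]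
    _ = Aalt ε ρ (ρL - ρ) * Aalt ε ρL lam := by
        simp only [Aalt, Finset.sum_mul_sum, AddMonoidAlgebra.single_mul_single,
          zero_add, e1, e2]
        refine Finset.sum_congr rfl fun u _ => Finset.sum_congr rfl fun w _ => ?_
        congr 1
        abel
    _ = Aalt ε ρ 0 * χ (ρL - ρ) * Aalt ε ρL lam := by rw [hχ]
    _ = Aalt ε ρL 0 * (Aalt ε ρ 0 * (χ (ρL - ρ) * χL lam)) := by
        rw [← hχL lam]; ring
end
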